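/- Let R be a commutative ring of characteristic p with a p-basis x_1,...,x_n. Then the differentials dx_1,...,dx_n form a free basis of the module of Kähler differentials Ω_{R/R^p} (equivalently of Ω_{R/𝔽_p}) as an R-module. -/

import Mathlib

/-- The image of the Frobenius `r ↦ r^p` of `R`, as a subring. -/
def pPowers (R : Type*) [CommRing R] (p : ℕ) : Subring R :=
  Subring.closure (Set.range fun r : R => r ^ p)

/-!
Every `R^p`-derivation `d` of `P = R^p[X_1, …, X_n]` descends along `φ : X_i ↦ x_i` to `R`.
Indeed a monomial factors as `(X^{e / p})^p · X^{e % p}`, the first factor is a `p`-th power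
that `d` kills and that `φ` sends into `R^p`, while the second is mapped by `φ` to a member of
the `p`-basis; hence `φ ∘ d` agrees with `φ ∘ d ∘ σ ∘ φ`, where `σ : x^c ↦ X^c` is the
`R^p`-linear section given by the `p`-basis, so `d` preserves `ker φ`. Descending `∂/∂X_i`
gives derivations `∂_i` of `R` with `∂_i x_j = δ_ij`, which separate the `dx_i`; and the `dx_i`
span `Ω` because the `x_i` generate `R` as an `R^p`-algebra.
-/

open MvPolynomial

theorem pPowers.pow_mem {R : Type*} [CommRing R] (p : ℕ) (r : R) : r ^ p ∈ pPowers R p :=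
  Subring.subset_closure ⟨r, rfl⟩

theorem Finset.prod_pow_eq_pow_mul_prod_pow_mod {ι M : Type*} [CommMonoid M] (s : Finset ι)
    (y : ι → M) (e : ι → ℕ) (p : ℕ) :
    ∏ j ∈ s, y j ^ e j = (∏ j ∈ s, y j ^ (e j / p)) ^ p * ∏ j ∈ s, y j ^ (e j % p) := by
  rw [← Finset.prod_pow, ← Finset.prod_mul_distrib]
  exact Finset.prod_congr rfl fun j _ => by rw [← pow_mul, ← pow_add, Nat.div_add_mod']

section Derivation

variable {S A : Type*} [CommRing S] [CommRing A] [Algebra S A]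

theorem Derivation.map_pow_char (p : ℕ) [CharP A p] (d : Derivation S A A) (a : A) :
    d (a ^ p) = 0 := by
  rw [d.leibniz_pow, smul_eq_mul, nsmul_eq_mul, CharP.cast_eq_zero, zero_mul]

theorem Derivation.map_prod_pow_eq_pow_mul_map_prod_pow_mod {ι : Type*} (p : ℕ) [CharP A p]
    (d : Derivation S A A) (s : Finset ι) (y : ι → A) (e : ι → ℕ) :
    d (∏ j ∈ s, y j ^ e j) = (∏ j ∈ s, y j ^ (e j / p)) ^ p * d (∏ j ∈ s, y j ^ (e j % p)) := by
  rw [s.prod_pow_eq_pow_mul_prod_pow_mod y e p, d.leibniz, d.map_pow_char p, smul_zero,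
    add_zero, smul_eq_mul]

theorem Algebra.adjoin_range_eq_top_of_span_prod_pow {ι κ : Type*} [Fintype ι] (x : ι → A)
    (e : κ → ι → ℕ) (h : Submodule.span S (Set.range fun k => ∏ i, x i ^ e k i) = ⊤) :
    Algebra.adjoin S (Set.range x) = ⊤ := by
  refine Algebra.eq_top_iff.mpr fun a => ?_
  have ha : a ∈ Submodule.span S (Set.range fun k => ∏ i, x i ^ e k i) := h ▸ Submodule.mem_top
  refine (Subalgebra.mem_toSubmodule _).mp (Submodule.span_le.mpr ?_ ha)
  rintro _ ⟨k, rfl⟩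
  exact Subalgebra.prod_mem _ fun i _ =>
    Subalgebra.pow_mem _ (Algebra.subset_adjoin (Set.mem_range_self i)) _

theorem KaehlerDifferential.span_range_D_eq_top_of_adjoin_eq_top {ι : Type*} (x : ι → A)
    (h : Algebra.adjoin S (Set.range x) = ⊤) :
    Submodule.span A (Set.range fun i => KaehlerDifferential.D S A (x i)) = ⊤ := by
  rw [eq_top_iff, ← KaehlerDifferential.span_range_derivation, Submodule.span_le]
  rintro _ ⟨a, rfl⟩
  have ha : a ∈ Algebra.adjoin S (Set.range x) := h ▸ Algebra.mem_top
  induction ha using Algebra.adjoin_induction with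
  | mem _ hy =>
    obtain ⟨i, rfl⟩ := hy
    exact Submodule.subset_span ⟨i, rfl⟩
  | algebraMap s => simp
  | add a b _ _ ha hb => rw [map_add]; exact add_mem ha hb
  | mul a b _ _ ha hb =>
    rw [Derivation.leibniz]
    exact add_mem (Submodule.smul_mem _ _ hb) (Submodule.smul_mem _ _ ha)

theorem KaehlerDifferential.linearIndependent_D_of_apply_eq_single {ι : Type*} [DecidableEq ι]
    (x : ι → A) (D : ι → Derivation S A A)
    (h : ∀ i j, D i (x j) = (Pi.single j (1 : A) : ι → A) i) :
    LinearIndependent A (fun i => KaehlerDifferential.D S A (x i)) := by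
  refine LinearIndependent.of_comp (LinearMap.pi fun i => (D i).liftKaehlerDifferential) ?_
  convert Pi.linearIndependent_single_one ι A using 1
  · ext j i
    simp [h]
  · rfl

end Derivation

namespace pPowers

variable {p : ℕ} [NeZero p] {R : Type*} [CommRing R] [CharP R p] {n : ℕ} {x : Fin n → R}

theorem aeval_derivation_eq_zero_of_aeval_eq_zero
    (B : Module.Basis (Fin n → Fin p) (pPowers R p) R) (hB : ∀ c, B c = ∏ j, x j ^ (c j : ℕ))
    (d : Derivation (pPowers R p) (MvPolynomial (Fin n) (pPowers R p))
      (MvPolynomial (Fin n) (pPowers R p)))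
    {f : MvPolynomial (Fin n) (pPowers R p)} (hf : aeval x f = 0) : aeval x (d f) = 0 := by
  let φ := (aeval x : MvPolynomial (Fin n) (pPowers R p) →ₐ[pPowers R p] R).toLinearMap
  let σ := B.constr (pPowers R p) fun c => ∏ j, (X j : MvPolynomial _ (pPowers R p)) ^ (c j : ℕ)
  suffices h : φ ∘ₗ d.toLinearMap ∘ₗ σ ∘ₗ φ = φ ∘ₗ d.toLinearMap by
    simpa [φ, hf] using (LinearMap.congr_fun h f).symm
  refine (basisMonomials _ _).ext fun s => ?_
  simp only [coe_basisMonomials, monomial_eq, C_1, one_mul]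
  rw [Finsupp.prod_fintype _ _ fun _ => pow_zero _]
  let c : Fin n → Fin p := fun j => ⟨s j % p, Nat.mod_lt _ (NeZero.pos p)⟩
  let q : pPowers R p := ⟨(∏ j, x j ^ (s j / p)) ^ p, pPowers.pow_mem p _⟩
  have hφ : φ (∏ j, X j ^ s j) = q • B c := by
    simp only [φ, AlgHom.toLinearMap_apply, map_prod, map_pow, aeval_X]
    rw [Subring.smul_def, smul_eq_mul, hB, Finset.prod_pow_eq_pow_mul_prod_pow_mod _ _ _ p]
  simp only [LinearMap.comp_apply, Derivation.coeFn_coe, hφ, map_smul, σ, B.constr_basis]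
  rw [d.map_prod_pow_eq_pow_mul_map_prod_pow_mod p _ _ s]
  simp [φ, q, c, Subring.smul_def]

theorem exists_derivation_apply_eq_single (B : Module.Basis (Fin n → Fin p) (pPowers R p) R)
    (hB : ∀ c, B c = ∏ j, x j ^ (c j : ℕ))
    (hx : Function.Surjective (aeval x : MvPolynomial (Fin n) (pPowers R p) →ₐ[pPowers R p] R)) :
    ∃ D : Fin n → Derivation (pPowers R p) R R,
      ∀ i j, D i (x j) = (Pi.single j (1 : R) : Fin n → R) i := by
  refine ⟨fun i => Derivation.liftOfSurjective hx
    fun _ hf => aeval_derivation_eq_zero_of_aeval_eq_zero B hB (pderiv i) hf, fun i j => ?_⟩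
  rw [← aeval_X (R := pPowers R p) x j, Derivation.liftOfSurjective_apply, pderiv_X]
  simp [Pi.single_apply, eq_comm]

end pPowers

/-- Let `R` be a commutative ring of characteristic `p` with a `p`-basis `x_1, …, x_n`
(the monomials `x^b`, `0 ≤ b_i ≤ p−1`, form a free `R^p`-module basis of `R`).
Then the differentials `dx_1, …, dx_n` form a free basis of the module of Kähler
differentials `Ω_{R/R^p}` as an `R`-module. -/
theorem pBasis_gives_differential_basis (p : ℕ) [Fact p.Prime]
    {R : Type*} [CommRing R] [CharP R p] (n : ℕ) (x : Fin n → R)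
    (hind : LinearIndependent (pPowers R p)
      (fun b : Fin n → Fin p => ∏ i, x i ^ ((b i : ℕ))))
    (hspan : Submodule.span (pPowers R p)
      (Set.range fun b : Fin n → Fin p => ∏ i, x i ^ ((b i : ℕ))) = ⊤) :
    LinearIndependent R (fun i : Fin n => KaehlerDifferential.D (pPowers R p) R (x i)) ∧
    Submodule.span R
      (Set.range fun i : Fin n => KaehlerDifferential.D (pPowers R p) R (x i)) = ⊤ := by
  have hadjoin := Algebra.adjoin_range_eq_top_of_span_prod_pow x _ hspan
  have hsurj : Function.Surjective
      (aeval x : MvPolynomial (Fin n) (pPowers R p) →ₐ[pPowers R p] R) := by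
    rw [← AlgHom.range_eq_top, ← Algebra.adjoin_range_eq_range_aeval, hadjoin]
  obtain ⟨D, hD⟩ := pPowers.exists_derivation_apply_eq_single (Module.Basis.mk hind hspan.ge)
    (fun _ => Module.Basis.mk_apply _ _ _) hsurj
  exact ⟨KaehlerDifferential.linearIndependent_D_of_apply_eq_single x D hD,
    KaehlerDifferential.span_range_D_eq_top_of_adjoin_eq_top x hadjoin⟩
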